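/- The set G = G_1 ∪ F_2 is a minimal set of generators of the additive submonoid ⟨F_1 ∪ F_2⟩ of ℕ: the submonoid generated by G equals ⟨F_1 ∪ F_2⟩, and for every x ∈ G, x does not belong to the submonoid generated by G ∖ {x}. -/

import Mathlib

/-- `q₀ = 2^s`. -/
def q0 (s : ℕ) : ℕ := 2 ^ s

/-- `q = 2 q₀²`. -/
def qS (s : ℕ) : ℕ := 2 * q0 s ^ 2

/-- `m_{j,k,ℓ} = ⌈(q₀/(q₀−1))·(j + k + ℓ − (k+ℓ)/q)⌉`. -/
def mval (s j k l : ℕ) : ℤ :=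
  ⌈((q0 s : ℚ) / ((q0 s : ℚ) - 1)) *
    ((j : ℚ) + (k : ℚ) + (l : ℚ) - ((k : ℚ) + (l : ℚ)) / (qS s : ℚ))⌉

/-- `F₁ = { hq − (ℓ+2k)q₀ − j : ℓ ∈ {0,1}, k,j ∈ {0,…,q₀−1},
    h ∈ {max{1, m_{j,k,ℓ}},…,2q₀} }`. -/
def F1 (s : ℕ) : Set ℕ :=
  {n | ∃ h j k l : ℕ, l ≤ 1 ∧ k < q0 s ∧ j < q0 s ∧
    max 1 (mval s j k l) ≤ (h : ℤ) ∧ h ≤ 2 * q0 s ∧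
    n = h * qS s - (l + 2 * k) * q0 s - j}

/-- `F₂ = { hq − (2h−2q₀−1)q₀ − (q₀−1) : h ∈ {q₀+1,…,2q₀} }`. -/
def F2 (s : ℕ) : Set ℕ :=
  {n | ∃ h : ℕ, q0 s + 1 ≤ h ∧ h ≤ 2 * q0 s ∧
    n = h * qS s - (2 * h - 2 * q0 s - 1) * q0 s - (q0 s - 1)}

/-- `G₁ = { hq − kq₀ − ⌊(2h−k−2)/2⌋ : h ∈ {1,…,q₀}, k ∈ {0,…,2h−2} }`. -/
def G1 (s : ℕ) : Set ℕ :=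
  {n | ∃ h k : ℕ, 1 ≤ h ∧ h ≤ q0 s ∧ k ≤ 2 * h - 2 ∧
    n = h * qS s - k * q0 s - (2 * h - k - 2) / 2}

/-!
Write `q = 2 q₀²`. Every generator in `G` has the form `h q - K q₀ - j` with `K q₀ + j < q`,
`j < q₀` and weight `2h - K - 2j ∈ {2, 3}`, and for such a "canonical" representation the weight
dominates that of any other representation `H q - K' q₀ - J` with `K', J ≥ 0` of the same number
(the difference is `2c(1 - q₀) + a(1 - 2q₀)` with `c, a ≥ 0`). Since value and weight are
additive, a sum of `t` generators has weight at least `2t`, so a generator is never a sum of two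
or more others.

Conversely, `G₁` consists of the elements `(j+k+ℓ+1) q - (ℓ+2k) q₀ - j` with `j+k+ℓ < q₀`, so
`G₁ ⊆ F₁`, and the bound `m_{j,k,ℓ} > j+k+ℓ` (resp. `> j+k+ℓ+1` once `j+k+ℓ ≥ q₀`) shows that every
element of `F₁` is a multiple of `q ∈ G₁` plus one (resp. two) elements of `G₁`.
-/

lemma two_le_q0 {s : ℕ} (hs : 1 ≤ s) : 2 ≤ q0 s :=
  Nat.le_self_pow (by omega) 2

-- `hn` is `n (q₀ - 1) < q₀ (j + k + l)` without truncated subtraction.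
lemma lt_mval {s j k l n : ℕ} (hs : 1 ≤ s) (hk : k < q0 s) (hl : l ≤ 1)
    (hn : n * q0 s < q0 s * (j + k + l) + n) : (n : ℤ) < mval s j k l := by
  have hQ : (2 : ℚ) ≤ q0 s := by exact_mod_cast two_le_q0 hs
  have hnQ : (n : ℚ) * q0 s + 1 ≤ q0 s * (j + k + l) + n := by exact_mod_cast hn
  have hkl : (k : ℚ) + l ≤ q0 s := by exact_mod_cast (by omega : k + l ≤ q0 s)
  have he : (q0 s : ℚ) * ((k + l) / qS s) ≤ 1 / 2 := by
    rw [qS]; push_cast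
    rw [mul_div_assoc', div_le_iff₀ (by positivity)]
    nlinarith
  rw [mval, Int.lt_ceil, div_mul_eq_mul_div, lt_div_iff₀ (by linarith)]
  push_cast
  nlinarith

lemma mval_le {s j k l : ℕ} (hs : 1 ≤ s) (h : j + k + l + 1 ≤ q0 s) :
    mval s j k l ≤ j + k + l + 1 := by
  have hQ : (2 : ℚ) ≤ q0 s := by exact_mod_cast two_le_q0 hs
  have hS : (j : ℚ) + k + l + 1 ≤ q0 s := by exact_mod_cast h
  have he : 0 ≤ ((k : ℚ) + l) / qS s := by positivity
  rw [mval, Int.ceil_le, div_mul_eq_mul_div, div_le_iff₀ (by linarith)]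
  push_cast
  nlinarith

lemma mul_add_lt_two_mul_sq {Q K j : ℕ} (hK : K < 2 * Q) (hj : j < Q) :
    K * Q + j < 2 * Q ^ 2 := by
  nlinarith

lemma mul_add_le_mul_qS {s a K j : ℕ} (ha : 1 ≤ a) (hK : K < 2 * q0 s) (hj : j < q0 s) :
    K * q0 s + j ≤ a * qS s :=
  (mul_add_lt_two_mul_sq hK hj).le.trans (Nat.le_mul_of_pos_left _ ha)

lemma mul_sub_mem_of_le {M : AddSubmonoid ℕ} {q a h c : ℕ} (hq : q ∈ M) (ha : a ≤ h)
    (hc : c ≤ a * q) (hac : a * q - c ∈ M) : h * q - c ∈ M := by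
  have hsplit : h * q - c = (h - a) • q + (a * q - c) := by
    rw [smul_eq_mul, Nat.sub_mul]
    have := Nat.mul_le_mul_right q ha
    omega
  rw [hsplit]
  exact add_mem (nsmul_mem hq _) hac

lemma add_mul_sub_add {q a b c d : ℕ} (hc : c ≤ a * q) (hd : d ≤ b * q) :
    (a + b) * q - (c + d) = (a * q - c) + (b * q - d) := by
  rw [add_mul]; omega

lemma mem_G1_iff {s x : ℕ} : x ∈ G1 s ↔ ∃ j k l, l ≤ 1 ∧ j + k + l + 1 ≤ q0 s ∧
    x = (j + k + l + 1) * qS s - ((l + 2 * k) * q0 s + j) := by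
  constructor
  · rintro ⟨h, K, hh, hhQ, hK, rfl⟩
    obtain ⟨k, l, hl, rfl⟩ : ∃ k l, l ≤ 1 ∧ K = l + 2 * k := ⟨K / 2, K % 2, by omega, by omega⟩
    obtain ⟨j, rfl⟩ : ∃ j, h = j + k + l + 1 := ⟨h - k - l - 1, by omega⟩
    refine ⟨j, k, l, hl, hhQ, ?_⟩
    rw [Nat.sub_sub]
    congr 2
    omega
  · rintro ⟨j, k, l, hl, hS, rfl⟩
    refine ⟨j + k + l + 1, l + 2 * k, by omega, hS, by omega, ?_⟩
    rw [Nat.sub_sub]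
    congr 2
    omega

lemma G1_subset_F1 {s : ℕ} (hs : 1 ≤ s) : G1 s ⊆ F1 s := by
  intro x hx
  obtain ⟨j, k, l, hl, hS, rfl⟩ := mem_G1_iff.mp hx
  refine ⟨j + k + l + 1, j, k, l, hl, by omega, by omega, ?_, by omega, by rw [Nat.sub_sub]⟩
  push_cast
  exact max_le (by omega) (mval_le hs hS)

lemma F1_subset_closure_G1 {s : ℕ} (hs : 1 ≤ s) : F1 s ⊆ AddSubmonoid.closure (G1 s) := by
  rintro n ⟨h, j, k, l, hl, hk, hj, hmh, hh, rfl⟩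
  have hQ := two_le_q0 hs
  have hh1 : 1 ≤ (h : ℤ) := (le_max_left _ _).trans hmh
  have hmval : mval s j k l ≤ h := (le_max_right _ _).trans hmh
  have hgen {j' k' l' : ℕ} (hl' : l' ≤ 1) (hS : j' + k' + l' + 1 ≤ q0 s) :
      (j' + k' + l' + 1) * qS s - ((l' + 2 * k') * q0 s + j') ∈ AddSubmonoid.closure (G1 s) :=
    AddSubmonoid.subset_closure (mem_G1_iff.mpr ⟨j', k', l', hl', hS, rfl⟩)
  have hq : qS s ∈ AddSubmonoid.closure (G1 s) := by
    simpa using hgen (j' := 0) (k' := 0) (l' := 0) (by omega) (by omega)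
  rw [Nat.sub_sub]
  rcases le_or_gt (j + k + l + 1) (q0 s) with hS | hS
  · have hjkl : j + k + l + 1 ≤ h := by
      rcases Nat.eq_zero_or_pos (j + k + l) with h0 | h0
      · omega
      · have := lt_mval hs hk hl (j := j) (n := j + k + l) (by rw [mul_comm]; omega)
        omega
    exact mul_sub_mem_of_le hq hjkl (mul_add_le_mul_qS (by omega) (by omega) hj) (hgen hl hS)
  · have hjkl : j + k + l + 2 ≤ h := by
      have := lt_mval hs hk hl (j := j) (n := j + k + l + 1) (by rw [add_mul, mul_comm]; omega)
      omega
    obtain ⟨k₁, k₂, rfl, h₁, h₂⟩ :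
        ∃ k₁ k₂, k = k₁ + k₂ ∧ j + k₁ + 0 + 1 ≤ q0 s ∧ 0 + k₂ + l + 1 ≤ q0 s :=
      ⟨min k (q0 s - 1 - j), k - min k (q0 s - 1 - j), by omega, by omega, by omega⟩
    have hsum : (l + 2 * (k₁ + k₂)) * q0 s + j =
        ((0 + 2 * k₁) * q0 s + j) + ((l + 2 * k₂) * q0 s + 0) := by ring
    have hb₁ : (0 + 2 * k₁) * q0 s + j ≤ (j + k₁ + 0 + 1) * qS s :=
      mul_add_le_mul_qS (by omega) (by omega) hj
    have hb₂ : (l + 2 * k₂) * q0 s + 0 ≤ (0 + k₂ + l + 1) * qS s :=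
      mul_add_le_mul_qS (by omega) (by omega) (by omega)
    rw [hsum]
    refine mul_sub_mem_of_le hq (a := (j + k₁ + 0 + 1) + (0 + k₂ + l + 1)) (by omega)
      ((add_le_add hb₁ hb₂).trans_eq (add_mul _ _ _).symm) ?_
    rw [add_mul_sub_add hb₁ hb₂]
    exact add_mem (hgen (l' := 0) zero_le_one h₁) (hgen hl h₂)

lemma weight_le_of_repr_eq {Q h K j H K' J : ℤ} (hQ : 1 ≤ Q) (hj : j < Q)
    (hKj : K * Q + j < 2 * Q ^ 2) (hK' : 0 ≤ K') (hJ : 0 ≤ J)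
    (heq : H * (2 * Q ^ 2) - K' * Q - J = h * (2 * Q ^ 2) - K * Q - j) :
    2 * H - K' - 2 * J ≤ 2 * h - K - 2 * j := by
  obtain ⟨c, rfl⟩ : ∃ c, H = h + c := ⟨H - h, by ring⟩
  have hc : 0 ≤ c := by
    by_contra! hc
    nlinarith
  obtain ⟨a, rfl⟩ : ∃ a, K' = K + 2 * c * Q - a := ⟨K + 2 * c * Q - K', by ring⟩
  have hJa : J = j + a * Q := by linear_combination -heq
  have ha : 0 ≤ a := by
    by_contra! ha
    nlinarith
  nlinarith [mul_nonneg hc (by linarith : 0 ≤ Q - 1), mul_nonneg ha (by linarith : 0 ≤ 2 * Q - 1)]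

lemma exists_repr_of_mem {s x : ℕ} (hs : 1 ≤ s) (hx : x ∈ G1 s ∪ F2 s) :
    ∃ h K j : ℕ, (x : ℤ) = h * qS s - K * q0 s - j ∧ K * q0 s + j < qS s ∧ j < q0 s ∧
      2 ≤ 2 * (h : ℤ) - K - 2 * j ∧ 2 * (h : ℤ) - K - 2 * j ≤ 3 := by
  have hQ := two_le_q0 hs
  rcases hx with hx | ⟨h, hh₁, hh₂, rfl⟩
  · obtain ⟨j, k, l, hl, hS, rfl⟩ := mem_G1_iff.mp hx
    refine ⟨j + k + l + 1, l + 2 * k, j, ?_, mul_add_lt_two_mul_sq (by omega) (by omega),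
      by omega, by omega, by omega⟩
    rw [Nat.cast_sub (mul_add_le_mul_qS (by omega) (by omega) (by omega))]
    push_cast
    ring
  · refine ⟨h, 2 * h - 2 * q0 s - 1, q0 s - 1, ?_, mul_add_lt_two_mul_sq (by omega) (by omega),
      by omega, by omega, by omega⟩
    rw [Nat.sub_sub, Nat.cast_sub (mul_add_le_mul_qS (by omega) (by omega) (by omega))]
    push_cast
    ring

lemma exists_repr_sum {s : ℕ} (hs : 1 ≤ s) (L : List ℕ) (hL : ∀ y ∈ L, y ∈ G1 s ∪ F2 s) :
    ∃ H K J : ℕ, (L.sum : ℤ) = H * qS s - K * q0 s - J ∧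
      2 * (L.length : ℤ) ≤ 2 * H - K - 2 * J := by
  induction L with
  | nil => exact ⟨0, 0, 0, by simp, by simp⟩
  | cons y L ih =>
    obtain ⟨H, K, J, hsum, hw⟩ := ih fun z hz => hL z (List.mem_cons_of_mem y hz)
    obtain ⟨h, K', J', hy, -, -, hw', -⟩ := exists_repr_of_mem hs (hL y List.mem_cons_self)
    refine ⟨h + H, K' + K, J' + J, ?_, ?_⟩
    · push_cast [List.sum_cons, hsum, hy]
      ring
    · push_cast [List.length_cons]
      linarith

lemma notMem_closure_diff_singleton {s x : ℕ} (hs : 1 ≤ s) (hx : x ∈ G1 s ∪ F2 s) :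
    x ∉ AddSubmonoid.closure ((G1 s ∪ F2 s) \ {x}) := by
  intro hmem
  obtain ⟨L, hL, rfl⟩ := AddSubmonoid.exists_list_of_mem_closure hmem
  obtain ⟨h, K, j, hx, hKj, hj, hw₂, hw₃⟩ := exists_repr_of_mem hs hx
  obtain ⟨H, K', J, hsum, hw⟩ := exists_repr_sum hs L fun y hy => (hL y hy).1
  have hq : ((qS s : ℕ) : ℤ) = 2 * (q0 s : ℤ) ^ 2 := by push_cast [qS]; ring
  have hQ : (1 : ℤ) ≤ q0 s := by exact_mod_cast (two_le_q0 hs).trans' one_le_two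
  rw [hq] at hx hsum
  have hlen : 2 * (L.length : ℤ) ≤ 3 :=
    hw.trans <| (weight_le_of_repr_eq hQ (by exact_mod_cast hj) (by rw [← hq]; exact_mod_cast hKj)
      (by positivity) (by positivity) (hsum.symm.trans hx)).trans hw₃
  match L, hL, hlen, hx with
  | [], _, _, hx =>
    have hKj' : (K * q0 s + j : ℤ) < 2 * (q0 s : ℤ) ^ 2 := by rw [← hq]; exact_mod_cast hKj
    simp only [List.sum_nil, Nat.cast_zero] at hx
    nlinarith
  | [y], hL, _, _ => exact (hL y (List.mem_singleton_self y)).2 (by simp)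
  | _ :: _ :: _, _, hlen, _ =>
    simp only [List.length_cons] at hlen
    omega

lemma closure_F1_eq_closure_G1 {s : ℕ} (hs : 1 ≤ s) :
    AddSubmonoid.closure (F1 s) = AddSubmonoid.closure (G1 s) :=
  le_antisymm (AddSubmonoid.closure_le.mpr (F1_subset_closure_G1 hs))
    (AddSubmonoid.closure_mono (G1_subset_F1 hs))

/-- `G = G₁ ∪ F₂` is a minimal set of generators of `⟨F₁ ∪ F₂⟩`. -/
theorem stmt15 (s : ℕ) (hs : 1 ≤ s) :
    AddSubmonoid.closure (G1 s ∪ F2 s) = AddSubmonoid.closure (F1 s ∪ F2 s) ∧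
    ∀ x ∈ G1 s ∪ F2 s, x ∉ AddSubmonoid.closure ((G1 s ∪ F2 s) \ {x}) := by
  refine ⟨?_, fun x hx => notMem_closure_diff_singleton hs hx⟩
  rw [AddSubmonoid.closure_union, AddSubmonoid.closure_union, closure_F1_eq_closure_G1 hs]
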